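/- arXiv:2212.12918 — 3 statements merged into one kernel-verified Lean document; each statement's English description precedes it below -/
import Mathlib

section
/- Let D be a nonabelian finite group with trivial center such that every proper nontrivial normal subgroup of D is its unique Sylow r-subgroup (for a fixed prime r). Then for every finite index set I and every surjective homomorphism π : D^I → D, there exists i ∈ I such that ker(π) = ker(π_i), where π_i : D^I → D is the i-th coordinate projection. -/
/-!
The images `N i = π(D_i)` of the coordinate factors are normal subgroups of `D` generating `D`.
Since `D` has trivial center it is not an `r`-group, so the Sylow subgroup `S` is proper and the
`N i` cannot all lie in `S`; by the hypothesis on normal subgroups some `N i` is all of `D`.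
The other factors commute with `D_i`, so their images are central, hence trivial. Thus `π`
factors as `φ ∘ π_i` with `φ : D → D` surjective, hence bijective as `D` is finite.
-/

namespace MonoidHom

theorem pi_ext_comp_mulSingle {ι M : Type*} [Monoid M] {N : ι → Type*} [∀ i, Monoid (N i)]
    [Finite ι] [DecidableEq ι] {f g : (∀ i, N i) →* M}
    (h : ∀ i, f.comp (MonoidHom.mulSingle N i) = g.comp (MonoidHom.mulSingle N i)) : f = g := by
  cases nonempty_fintype ι
  exact noncommPiCoprodEquiv.symm.injective (Subtype.ext (funext h))

variable {ι G : Type*} [Group G] {H : ι → Type*} [∀ i, Group (H i)]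

theorem range_eq_iSup_range_comp_mulSingle [Finite ι] [DecidableEq ι] (f : (∀ i, H i) →* G) :
    f.range = ⨆ i, (f.comp (MonoidHom.mulSingle H i)).range := by
  cases nonempty_fintype ι
  conv_lhs => rw [← noncommPiCoprodEquiv.apply_symm_apply f]
  exact noncommPiCoprod_range (hcomm := (noncommPiCoprodEquiv.symm f).2) _

theorem normal_range_mulSingle [DecidableEq ι] (i : ι) :
    (MonoidHom.mulSingle H i).range.Normal := by
  refine ⟨?_⟩
  rintro _ ⟨x, rfl⟩ g
  refine ⟨g i * x * (g i)⁻¹, funext fun j => ?_⟩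
  by_cases hj : j = i
  · subst hj
    simp
  · simp [Pi.mulSingle_eq_of_ne hj]

theorem normal_range_comp_mulSingle [DecidableEq ι] {f : (∀ i, H i) →* G}
    (hf : Function.Surjective f) (i : ι) : (f.comp (MonoidHom.mulSingle H i)).range.Normal := by
  rw [range_comp]
  exact (normal_range_mulSingle i).map f hf

theorem range_comp_mulSingle_le_center [DecidableEq ι] (f : (∀ i, H i) →* G) {i j : ι}
    (hi : (f.comp (MonoidHom.mulSingle H i)).range = ⊤) (hji : j ≠ i) :
    (f.comp (MonoidHom.mulSingle H j)).range ≤ Subgroup.center G := by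
  rintro _ ⟨y, rfl⟩
  rw [Subgroup.mem_center_iff]
  intro g
  obtain ⟨x, rfl⟩ : g ∈ (f.comp (MonoidHom.mulSingle H i)).range := hi ▸ Subgroup.mem_top g
  exact ((Pi.mulSingle_commute hji.symm x y).map f).eq

theorem eq_comp_evalMonoidHom_of_comp_mulSingle_eq_one [Finite ι] [DecidableEq ι]
    {f : (∀ i, H i) →* G} {i : ι} (h : ∀ j, j ≠ i → f.comp (MonoidHom.mulSingle H j) = 1) :
    f = (f.comp (MonoidHom.mulSingle H i)).comp (Pi.evalMonoidHom H i) := by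
  refine pi_ext_comp_mulSingle fun j => ?_
  by_cases hj : j = i
  · subst hj
    ext x
    simp
  · ext x
    simp [Pi.mulSingle_eq_of_ne' hj, DFunLike.congr_fun (h j hj) x]

end MonoidHom

theorem Sylow.coe_ne_top_of_center_eq_bot {G : Type*} [Group G] [Finite G] [Nontrivial G]
    {p : ℕ} [Fact p.Prime] (hcenter : Subgroup.center G = ⊥) (S : Sylow p G) :
    (S : Subgroup G) ≠ ⊤ := by
  intro hS
  have hG : IsPGroup p G := IsPGroup.of_equiv (hS ▸ S.isPGroup') Subgroup.topEquiv
  have := hG.center_nontrivial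
  rw [hcenter] at this
  exact not_nontrivial _ this

theorem Subgroup.exists_eq_top_of_iSup_eq_top {G ι : Type*} [Group G] {K : Subgroup G}
    (hK : K ≠ ⊤) (hnorm : ∀ N : Subgroup G, N.Normal → N ≠ ⊥ → N ≠ ⊤ → N = K)
    {N : ι → Subgroup G} (hN : ∀ i, (N i).Normal) (hsup : ⨆ i, N i = ⊤) : ∃ i, N i = ⊤ := by
  by_contra! h
  refine hK (top_le_iff.mp (hsup ▸ iSup_le fun i => ?_))
  by_cases hbot : N i = ⊥
  · exact hbot ▸ bot_le
  · exact (hnorm (N i) (hN i) hbot (h i)).le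

/-- Let `D` be a nonabelian finite group with trivial center such that every
proper nontrivial normal subgroup of `D` is its unique Sylow `r`-subgroup (`r` a fixed prime).
Then for every finite index set `I` and surjective homomorphism `π : D^I → D` there is `i ∈ I`
with `ker π = ker π_i`, where `π_i` is the `i`-th coordinate projection. -/
theorem stmt_5 (D : Type) [Group D] [Finite D] (r : ℕ) (hr : r.Prime)
    (hnab : ∃ a b : D, a * b ≠ b * a)
    (hcenter : Subgroup.center D = ⊥)
    (S : Sylow r D)
    (hnorm : ∀ N : Subgroup D, N.Normal → N ≠ ⊥ → N ≠ ⊤ → N = (S : Subgroup D))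
    (I : Type) [Finite I] (π : (I → D) →* D) (hπ : Function.Surjective π) :
    ∃ i : I, π.ker = (Pi.evalMonoidHom (fun _ : I => D) i).ker := by
  classical
  obtain ⟨a, b, hab⟩ := hnab
  have : Nontrivial D := ⟨⟨a * b, b * a, hab⟩⟩
  have : Fact r.Prime := ⟨hr⟩
  obtain ⟨i, hi⟩ := Subgroup.exists_eq_top_of_iSup_eq_top (S.coe_ne_top_of_center_eq_bot hcenter)
    hnorm (MonoidHom.normal_range_comp_mulSingle hπ)
    (π.range_eq_iSup_range_comp_mulSingle ▸ π.range_eq_top.mpr hπ)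
  have hvanish : ∀ j, j ≠ i → π.comp (MonoidHom.mulSingle _ j) = 1 := fun j hj =>
    MonoidHom.range_eq_bot_iff.mp
      (le_bot_iff.mp (hcenter ▸ π.range_comp_mulSingle_le_center hi hj))
  refine ⟨i, ?_⟩
  rw [MonoidHom.eq_comp_evalMonoidHom_of_comp_mulSingle_eq_one hvanish,
    MonoidHom.ker_comp_of_injective]
  exact Finite.injective_iff_surjective.mpr (MonoidHom.range_eq_top.mp hi)
end

section
/- Let G and E be profinite groups, and let G ⋆ E denote their free profinite product. Suppose G is torsion-free away from a distinguished set of involutions and E is torsion-free (e.g., E projective). Then every involution of G ⋆ E is conjugate in G ⋆ E to an involution lying in G or in E. -/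
/-!
If an involution `x` of `F` is not conjugate into the compact set `ι₁ G ∪ ι₂ E`, this is already
visible in a finite quotient `Q = F / U`: the image `t` of `x` is not conjugate into the images of
`G` and `E`. Over `Q` we build a finite group `X → Q` in which no preimage of `t` is an
involution, but through which every subgroup of `Q` containing no conjugate of `t` lifts. Then
`G → Q` and `E → Q` lift to `X`, the universal property gives a lift `F → X` of `F → Q`, and it
sends `x` to an involution over `t`: a contradiction.

The group `X` consists of the pairs `(a, q)` of `(Q/⟨t⟩ → ℤ/4) ⋊ Q` with `a ≡ δ q (mod 2)`, where
`δ q (u⟨t⟩) = ε u - ε (q⁻¹ u)` for some `ε : Q → ℤ/2` with `ε (u t) = ε u + 1`: a cocycle with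
values in the induced module `Ind_⟨t⟩^Q (ℤ/2)` that represents the nontrivial character of `⟨t⟩`.
On a subgroup `H` containing no conjugate of `t` one can choose `ε` to be left `H`-invariant, so
`δ` is a coboundary on `H` and `H` lifts; but `t` fixes the coset `⟨t⟩`, where `δ t` is odd, so
the square of a lift of `t` is nontrivial there.
-/

/-- `F` together with `ι₁ : G → F`, `ι₂ : E → F` is the free profinite product (coproduct)
of the profinite groups `G` and `E`. -/
def IsProfiniteCoprod (G E F : Type) [Group G] [TopologicalSpace G] [Group E]
    [TopologicalSpace E] [Group F] [TopologicalSpace F]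
    (ι₁ : G →* F) (ι₂ : E →* F) : Prop :=
  Continuous ι₁ ∧ Continuous ι₂ ∧
    ∀ (H : Type) [Group H] [TopologicalSpace H] [IsTopologicalGroup H] [CompactSpace H]
      [T2Space H] [TotallyDisconnectedSpace H] (f : G →* H) (g : E →* H),
      Continuous f → Continuous g →
        ∃! h : F →* H, Continuous h ∧ h.comp ι₁ = f ∧ h.comp ι₂ = g

namespace HerfortRibes

open Subgroup SemidirectProduct

theorem exists_add_one_of_involutive {Y : Type*} {σ : Y → Y} (hσ : Function.Involutive σ)
    (hfix : ∀ y, σ y ≠ y) : ∃ f : Y → ZMod 2, ∀ y, f (σ y) = f y + 1 := by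
  classical
  refine ⟨fun y => if WellOrderingRel y (σ y) then 0 else 1, fun y => ?_⟩
  by_cases hy : WellOrderingRel y (σ y)
  · simp [hσ y, hy, asymm hy]
  · have : WellOrderingRel (σ y) y :=
      ((trichotomous_of WellOrderingRel y (σ y)).resolve_left hy).resolve_left (hfix y).symm
    simp [hσ y, hy, this]
    decide

variable {Q : Type*} [Group Q] {t : Q}

/-- The hypothesis `hH` says exactly that right multiplication by `t` has no fixed point on
`H \ Q`. -/
theorem exists_parity_of_forall_not_isConj (ht : t * t = 1) {H : Subgroup Q}
    (hH : ∀ h ∈ H, ¬IsConj h t) :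
    ∃ ε : Q → ZMod 2, (∀ h ∈ H, ∀ u, ε (h * u) = ε u) ∧ ∀ u, ε (u * t) = ε u + 1 := by
  let r := QuotientGroup.rightRel H
  let σ : Quotient r → Quotient r := Quotient.map' (· * t) fun a b hab => by
    rw [QuotientGroup.rightRel_apply] at hab ⊢
    simpa [mul_assoc] using hab
  have hσ : Function.Involutive σ := by
    rintro ⟨u⟩
    exact congrArg (Quotient.mk r) (by simp [mul_assoc, ht])
  have hfix : ∀ y, σ y ≠ y := by
    rintro ⟨u⟩ h
    have h' : u * (u * t)⁻¹ ∈ H := QuotientGroup.rightRel_apply.mp (Quotient.exact h)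
    rw [mul_inv_rev, inv_eq_of_mul_eq_one_right ht, ← mul_assoc] at h'
    exact hH _ h' (isConj_iff.mpr ⟨u⁻¹, by group⟩)
  obtain ⟨f, hf⟩ := exists_add_one_of_involutive hσ hfix
  refine ⟨fun u => f (Quotient.mk r u), fun h hh u => ?_, fun u => hf (Quotient.mk r u)⟩
  exact congrArg f (Quotient.sound (QuotientGroup.rightRel_apply.mpr (by simpa using inv_mem hh)))

lemma apply_mul_zpow_eq {α : Type*} {f : Q → α} (hf : ∀ u, f (u * t) = f u) (u : Q) (k : ℤ) :
    f (u * t ^ k) = f u := by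
  induction k using Int.induction_on with
  | zero => simp
  | succ k ih => rw [zpow_add_one, ← mul_assoc, hf, ih]
  | pred k ih => rw [← ih, ← hf, mul_assoc, ← zpow_add_one, sub_add_cancel]

variable (t) in
def liftOfMulRight {α : Type*} (f : Q → α) (hf : ∀ u, f (u * t) = f u) :
    Q ⧸ zpowers t → α :=
  Quotient.lift f fun u v huv => by
    obtain ⟨k, hk⟩ := QuotientGroup.leftRel_apply.mp huv
    rw [← apply_mul_zpow_eq hf u k, show t ^ k = u⁻¹ * v from hk, mul_inv_cancel_left]

def reduceMod2 : Multiplicative (ZMod 4) →* Multiplicative (ZMod 2) :=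
  AddMonoidHom.toMultiplicative (ZMod.castHom (by norm_num : 2 ∣ 4) (ZMod 2)).toAddMonoidHom

lemma reduceMod2_ne_of_mul_self_eq_one :
    ∀ a : Multiplicative (ZMod 4), a * a = 1 → reduceMod2 a ≠ .ofAdd 1 := by
  decide

section Arrow

variable {A : Type*} [MulAction Q A]

lemma conj_inl_inr_left_apply {M : Type*} [CommGroup M] (b : A → M) (h : Q) (ω : A) :
    (MulAut.conj (inl b : (A → M) ⋊[mulAutArrow] Q) (inr h)).left ω = b ω / b (h⁻¹ • ω) := by
  simp [div_eq_mul_inv]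
  rfl

def reduceMod2SemidirectProduct :
    (A → Multiplicative (ZMod 4)) ⋊[mulAutArrow] Q →*
      (A → Multiplicative (ZMod 2)) ⋊[mulAutArrow] Q :=
  SemidirectProduct.map (reduceMod2.compLeft A) (MonoidHom.id Q) fun _ => rfl

lemma reduceMod2SemidirectProduct_left_apply (y : (A → Multiplicative (ZMod 4)) ⋊[mulAutArrow] Q)
    (ω : A) : (reduceMod2SemidirectProduct y).left ω = reduceMod2 (y.left ω) := rfl

lemma reduceMod2SemidirectProduct_right (y : (A → Multiplicative (ZMod 4)) ⋊[mulAutArrow] Q) :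
    (reduceMod2SemidirectProduct y).right = y.right := rfl

end Arrow

lemma smul_mk_one_of_mem {q : Q} (hq : q ∈ zpowers t) :
    q • ((1 : Q) : Q ⧸ zpowers t) = ((1 : Q) : Q ⧸ zpowers t) := by
  rw [MulAction.Quotient.smul_mk, smul_eq_mul, mul_one, QuotientGroup.eq, mul_one]
  exact inv_mem hq

section Parity

variable {ε : Q → ZMod 2} (hε : ∀ u, ε (u * t) = ε u + 1)

def parityCocycle (q : Q) : Q ⧸ zpowers t → Multiplicative (ZMod 2) :=
  liftOfMulRight t (fun u => .ofAdd (ε u - ε (q⁻¹ * u))) fun u => by simp [← mul_assoc, hε]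

def parityHom : Q →* (Q ⧸ zpowers t → Multiplicative (ZMod 2)) ⋊[mulAutArrow] Q where
  toFun q := ⟨parityCocycle hε q, q⟩
  map_one' := by
    ext ω
    · induction ω using QuotientGroup.induction_on
      simp [parityCocycle, liftOfMulRight]
    · rfl
  map_mul' q₁ q₂ := by
    ext ω
    · induction ω using QuotientGroup.induction_on with | _ u
      change Multiplicative.ofAdd (ε u - ε ((q₁ * q₂)⁻¹ * u)) =
        .ofAdd (ε u - ε (q₁⁻¹ * u) + (ε (q₁⁻¹ * u) - ε (q₂⁻¹ * (q₁⁻¹ * u))))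
      rw [mul_inv_rev, mul_assoc, sub_add_sub_cancel]
    · rfl

def cocycleLifts : Subgroup ((Q ⧸ zpowers t → Multiplicative (ZMod 4)) ⋊[mulAutArrow] Q) :=
  (parityHom hε).range.comap reduceMod2SemidirectProduct

theorem mul_self_ne_one_of_mem_cocycleLifts (ht : t * t = 1) {y} (hy : y ∈ cocycleLifts hε)
    (hyt : y.right = t) : y * y ≠ 1 := by
  obtain ⟨q, hq⟩ := hy
  obtain rfl : t = q := hyt ▸ (congrArg right hq).symm
  intro hyy
  set ω₀ : Q ⧸ zpowers t := ((1 : Q) : Q ⧸ zpowers t)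
  have hsq : y.left ω₀ * y.left ω₀ = 1 := by
    have := congrFun (congrArg left hyy) ω₀
    change y.left ω₀ * y.left (y.right⁻¹ • ω₀) = 1 at this
    rwa [hyt, smul_mk_one_of_mem (inv_mem (mem_zpowers t))] at this
  have hred : reduceMod2 (y.left ω₀) = .ofAdd 1 := by
    have := congrFun (congrArg left hq) ω₀
    change Multiplicative.ofAdd (ε 1 - ε (t⁻¹ * 1)) = reduceMod2 (y.left ω₀) at this
    rw [← this, inv_eq_of_mul_eq_one_right ht, mul_one, ← one_mul t, hε]
    simp
  exact reduceMod2_ne_of_mul_self_eq_one _ hsq hred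

theorem exists_lift_to_cocycleLifts (ht : t * t = 1) {H : Subgroup Q}
    (hH : ∀ h ∈ H, ¬IsConj h t) : ∃ s : H →* cocycleLifts hε, ∀ h, (s h).1.right = h := by
  obtain ⟨ε', hε'H, hε't⟩ := exists_parity_of_forall_not_isConj ht hH
  let β := liftOfMulRight t (fun u => ε u - ε' u) fun u => by simp [hε, hε't]
  let b : Q ⧸ zpowers t → Multiplicative (ZMod 4) := fun ω => .ofAdd ((β ω).val : ZMod 4)
  have hb : ∀ ω, reduceMod2 (b ω) = .ofAdd (β ω) := fun ω => by simp [b, reduceMod2]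
  have key : ∀ h ∈ H,
      parityHom hε h = reduceMod2SemidirectProduct (MulAut.conj (inl b) (inr h)) := by
    intro h hh
    refine SemidirectProduct.ext (funext fun ω => ?_)
      (by simp [reduceMod2SemidirectProduct_right]; rfl)
    induction ω using QuotientGroup.induction_on with | _ u
    rw [reduceMod2SemidirectProduct_left_apply, conj_inl_inr_left_apply, map_div, hb, hb]
    change Multiplicative.ofAdd (ε u - ε (h⁻¹ * u)) =
      .ofAdd (ε u - ε' u - (ε (h⁻¹ * u) - ε' (h⁻¹ * u)))
    rw [hε'H _ (inv_mem hh), sub_sub_sub_cancel_right]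
  refine ⟨((MulAut.conj (inl b)).toMonoidHom.comp (inr.comp H.subtype)).codRestrict _
    fun h => ⟨h, key h h.2⟩, fun h => ?_⟩
  simp

end Parity

theorem exists_finite_extension_not_lifting_involution {Q : Type} [Group Q] [Finite Q] {t : Q}
    (ht : t * t = 1) (ht1 : t ≠ 1) :
    ∃ (X : Type) (_ : Group X) (_ : Finite X) (π : X →* Q), (∀ y, π y = t → y * y ≠ 1) ∧
      ∀ H : Subgroup Q, (∀ h ∈ H, ¬IsConj h t) → ∃ s : H →* X, π.comp s = H.subtype := by
  obtain ⟨ε, -, hε⟩ := exists_parity_of_forall_not_isConj ht (H := ⊥) (by simpa using ht1.symm)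
  have : Finite ((Q ⧸ zpowers t → Multiplicative (ZMod 4)) ⋊[mulAutArrow] Q) :=
    Finite.of_equiv _ equivProd.symm
  refine ⟨cocycleLifts hε, inferInstance, inferInstance, rightHom.comp (cocycleLifts hε).subtype,
    fun y hyt hyy => ?_, fun H hH => ?_⟩
  · exact mul_self_ne_one_of_mem_cocycleLifts hε ht y.2 hyt (congrArg Subtype.val hyy)
  · obtain ⟨s, hs⟩ := exists_lift_to_cocycleLifts hε ht hH
    exact ⟨s, MonoidHom.ext hs⟩

section Profinite

variable {F : Type*} [Group F] [TopologicalSpace F] [IsTopologicalGroup F] [CompactSpace F]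
  [T2Space F] [TotallyDisconnectedSpace F]

theorem exists_isConj_of_forall_openNormalSubgroup {K : Set F} (hK : IsCompact K) {x : F}
    (h : ∀ U : OpenNormalSubgroup F,
      ∃ w ∈ K, IsConj (w : F ⧸ U.toSubgroup) (x : F ⧸ U.toSubgroup)) :
    ∃ w ∈ K, IsConj w x := by
  by_contra hx
  let C := (fun p : F × F => p.1 * p.2 * p.1⁻¹) '' (Set.univ ×ˢ K)
  have hC : IsClosed C := ((isCompact_univ.prod hK).image (by fun_prop)).isClosed
  have hxC : x ∉ C := by
    rintro ⟨⟨c, w⟩, ⟨-, hw⟩, rfl⟩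
    exact hx ⟨w, hw, isConj_iff.mpr ⟨c, rfl⟩⟩
  obtain ⟨U, hU⟩ := ProfiniteGrp.exist_openNormalSubgroup_sub_open_nhds_of_one
    (hC.isOpen_compl.preimage (continuous_const_mul x)) (by simpa using hxC)
  obtain ⟨w, hw, hwx⟩ := h U
  obtain ⟨c, hc⟩ := isConj_iff.mp hwx
  obtain ⟨c, rfl⟩ := QuotientGroup.mk_surjective c
  have : x⁻¹ * (c * w * c⁻¹) ∈ U := QuotientGroup.eq.mp (by simpa using hc.symm)
  exact hU this ⟨(c, w), ⟨trivial, hw⟩, by group⟩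

end Profinite

end HerfortRibes

namespace IsProfiniteCoprod

variable {G E F : Type} [Group G] [TopologicalSpace G] [Group E] [TopologicalSpace E]
  [Group F] [TopologicalSpace F] {ι₁ : G →* F} {ι₂ : E →* F}

theorem hom_ext (hco : IsProfiniteCoprod G E F ι₁ ι₂) {H : Type} [Group H] [TopologicalSpace H]
    [IsTopologicalGroup H] [CompactSpace H] [T2Space H] [TotallyDisconnectedSpace H]
    {φ ψ : F →* H} (hφ : Continuous φ) (hψ : Continuous ψ) (h₁ : φ.comp ι₁ = ψ.comp ι₁)
    (h₂ : φ.comp ι₂ = ψ.comp ι₂) : φ = ψ :=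
  (hco.2.2 H _ _ (hψ.comp hco.1) (hψ.comp hco.2.1)).unique ⟨hφ, h₁, h₂⟩ ⟨hψ, rfl, rfl⟩

theorem injective_left (hco : IsProfiniteCoprod G E F ι₁ ι₂) [IsTopologicalGroup G]
    [CompactSpace G] [T2Space G] [TotallyDisconnectedSpace G] : Function.Injective ι₁ := by
  obtain ⟨φ, ⟨-, hφ, -⟩, -⟩ := hco.2.2 G (MonoidHom.id G) 1 continuous_id continuous_const
  exact Function.LeftInverse.injective (g := φ) (DFunLike.congr_fun hφ)

theorem injective_right (hco : IsProfiniteCoprod G E F ι₁ ι₂) [IsTopologicalGroup E]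
    [CompactSpace E] [T2Space E] [TotallyDisconnectedSpace E] : Function.Injective ι₂ := by
  obtain ⟨φ, ⟨-, -, hφ⟩, -⟩ := hco.2.2 E 1 (MonoidHom.id E) continuous_const continuous_id
  exact Function.LeftInverse.injective (g := φ) (DFunLike.congr_fun hφ)

theorem exists_isConj_mk_of_mul_self_eq_one (hco : IsProfiniteCoprod G E F ι₁ ι₂)
    [IsTopologicalGroup F] [CompactSpace F] (U : OpenNormalSubgroup F) {x : F} (hx : x * x = 1) :
    ∃ w ∈ Set.range ι₁ ∪ Set.range ι₂, IsConj (w : F ⧸ U.toSubgroup) (x : F ⧸ U.toSubgroup) := by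
  by_contra! hxU
  let q := QuotientGroup.mk' U.toSubgroup
  have ht : q x * q x = 1 := by rw [← map_mul, hx, map_one]
  have ht1 : q x ≠ 1 := fun h => hxU 1 (Or.inl ⟨1, map_one ι₁⟩) <| by
    rw [QuotientGroup.mk_one, show (x : F ⧸ U.toSubgroup) = 1 from h]
  obtain ⟨X, _, _, π, hπ, hlift⟩ :=
    HerfortRibes.exists_finite_extension_not_lifting_involution ht ht1
  obtain ⟨s₁, hs₁⟩ := hlift (q.comp ι₁).range <| by
    rintro _ ⟨g, rfl⟩
    exact hxU _ (Or.inl ⟨g, rfl⟩)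
  obtain ⟨s₂, hs₂⟩ := hlift (q.comp ι₂).range <| by
    rintro _ ⟨e, rfl⟩
    exact hxU _ (Or.inr ⟨e, rfl⟩)
  let _ : TopologicalSpace X := ⊥
  have : DiscreteTopology X := ⟨rfl⟩
  have hq : Continuous q := QuotientGroup.continuous_mk
  obtain ⟨φ, ⟨hφ, hφ₁, hφ₂⟩, -⟩ := hco.2.2 X (s₁.comp (q.comp ι₁).rangeRestrict)
    (s₂.comp (q.comp ι₂).rangeRestrict)
    ((continuous_of_discreteTopology (f := s₁)).comp
      (continuous_induced_rng.mpr (hq.comp hco.1)))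
    ((continuous_of_discreteTopology (f := s₂)).comp
      (continuous_induced_rng.mpr (hq.comp hco.2.1)))
  have hπφ : π.comp φ = q := hco.hom_ext ((continuous_of_discreteTopology (f := π)).comp hφ) hq
    (by rw [MonoidHom.comp_assoc, hφ₁, ← MonoidHom.comp_assoc, hs₁]; rfl)
    (by rw [MonoidHom.comp_assoc, hφ₂, ← MonoidHom.comp_assoc, hs₂]; rfl)
  exact hπ (φ x) (DFunLike.congr_fun hπφ x) (by rw [← map_mul, hx, map_one])

end IsProfiniteCoprod

theorem stmt_11_general (G E F : Type)
    [Group G] [TopologicalSpace G] [IsTopologicalGroup G] [CompactSpace G] [T2Space G]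
    [TotallyDisconnectedSpace G]
    [Group E] [TopologicalSpace E] [IsTopologicalGroup E] [CompactSpace E] [T2Space E]
    [TotallyDisconnectedSpace E]
    [Group F] [TopologicalSpace F] [IsTopologicalGroup F] [CompactSpace F] [T2Space F]
    [TotallyDisconnectedSpace F]
    (ι₁ : G →* F) (ι₂ : E →* F) (hco : IsProfiniteCoprod G E F ι₁ ι₂) :
    ∀ x : F, x * x = 1 → x ≠ 1 →
      ∃ z : F, (∃ g : G, g * g = 1 ∧ z * x * z⁻¹ = ι₁ g) ∨
        (∃ e : E, e * e = 1 ∧ z * x * z⁻¹ = ι₂ e) := by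
  intro x hx _
  obtain ⟨w, hw, hwx⟩ := HerfortRibes.exists_isConj_of_forall_openNormalSubgroup
    ((isCompact_range hco.1).union (isCompact_range hco.2.1))
    fun U => hco.exists_isConj_mk_of_mul_self_eq_one U hx
  obtain ⟨z, hz⟩ := isConj_iff.mp hwx.symm
  have hw2 : w * w = 1 := by
    rw [← hz, show z * x * z⁻¹ * (z * x * z⁻¹) = z * (x * x) * z⁻¹ by group, hx, mul_one,
      mul_inv_cancel]
  refine ⟨z, ?_⟩
  rcases hw with ⟨g, rfl⟩ | ⟨e, rfl⟩
  · exact Or.inl ⟨g, hco.injective_left (by rw [map_mul, hw2, map_one]), hz⟩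
  · exact Or.inr ⟨e, hco.injective_right (by rw [map_mul, hw2, map_one]), hz⟩

/-- Herfort–Ribes, special case: if `G` is a profinite group whose torsion
consists only of involutions and `E` is a torsion-free profinite group, then every
involution of the free profinite product `G ⋆ E` is conjugate to an involution lying
in `G` or in `E`. -/
theorem stmt_11 (G E F : Type)
    [Group G] [TopologicalSpace G] [IsTopologicalGroup G] [CompactSpace G] [T2Space G]
    [TotallyDisconnectedSpace G]
    [Group E] [TopologicalSpace E] [IsTopologicalGroup E] [CompactSpace E] [T2Space E]
    [TotallyDisconnectedSpace E]
    [Group F] [TopologicalSpace F] [IsTopologicalGroup F] [CompactSpace F] [T2Space F]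
    [TotallyDisconnectedSpace F]
    (ι₁ : G →* F) (ι₂ : E →* F) (hco : IsProfiniteCoprod G E F ι₁ ι₂)
    (hG : ∀ x : G, IsOfFinOrder x → x ≠ 1 → x * x = 1)
    (hE : ∀ y : E, IsOfFinOrder y → y = 1) :
    ∀ x : F, x * x = 1 → x ≠ 1 →
      ∃ z : F, (∃ g : G, g * g = 1 ∧ z * x * z⁻¹ = ι₁ g) ∨
        (∃ e : E, e * e = 1 ∧ z * x * z⁻¹ = ι₂ e) :=
  stmt_11_general G E F ι₁ ι₂ hco
end

section
/- Let G be a projective profinite group (i.e., every finite embedding problem for G with surjective data has a weak solution) and let E be a projective profinite group. Then the free profinite product G ⋆ E is projective. -/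
/-- A profinite group is projective if every finite embedding problem (with surjective
data) for it has a solution; continuity is expressed via openness of kernels. -/
def IsProjectiveProfinite (H : Type) [Group H] [TopologicalSpace H] : Prop :=
  ∀ (A B : Type) [Group A] [Group B] [Finite A] [Finite B] (α : B →* A) (φ : H →* A),
    Function.Surjective α → IsOpen (φ.ker : Set H) →
      ∃ ψ : H →* B, IsOpen (ψ.ker : Set H) ∧ α.comp ψ = φ

/-! Given an embedding problem `α : B ↠ A`, `φ : G ⋆ E → A`, solve the restricted problems
`φ ∘ ι₁` and `φ ∘ ι₂` in `G` and `E`, and glue the solutions into `ψ : G ⋆ E → B` by the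
universal property. Giving the finite groups the discrete topology, `α ∘ ψ` and `φ` are
continuous maps to a profinite group that agree on `G` and `E`, so they coincide by the
uniqueness part of the universal property. -/

theorem MonoidHom.continuous_iff_isOpen_ker {H A : Type} [Group H] [TopologicalSpace H]
    [IsTopologicalGroup H] [Group A] [TopologicalSpace A] [DiscreteTopology A] (f : H →* A) :
    Continuous f ↔ IsOpen (f.ker : Set H) := by
  refine ⟨fun hf ↦ (isOpen_discrete {1}).preimage hf, fun hker ↦ ?_⟩
  apply continuous_of_continuousAt_one
  rw [ContinuousAt, nhds_discrete A, map_one, Filter.tendsto_pure]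
  exact hker.mem_nhds (map_one f)

theorem IsProfiniteCoprod.hom_ext_s14 {G E F : Type} [Group G] [TopologicalSpace G] [Group E]
    [TopologicalSpace E] [Group F] [TopologicalSpace F] {ι₁ : G →* F} {ι₂ : E →* F}
    (hco : IsProfiniteCoprod G E F ι₁ ι₂) {H : Type} [Group H] [TopologicalSpace H]
    [IsTopologicalGroup H] [CompactSpace H] [T2Space H] [TotallyDisconnectedSpace H]
    {h h' : F →* H} (hh : Continuous h) (hh' : Continuous h')
    (h₁ : h.comp ι₁ = h'.comp ι₁) (h₂ : h.comp ι₂ = h'.comp ι₂) : h = h' :=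
  (hco.2.2 H (h.comp ι₁) (h.comp ι₂) (hh.comp hco.1) (hh.comp hco.2.1)).unique
    ⟨hh, rfl, rfl⟩ ⟨hh', h₁.symm, h₂.symm⟩

theorem stmt_14_general (G E F : Type)
    [Group G] [TopologicalSpace G] [IsTopologicalGroup G]
    [Group E] [TopologicalSpace E] [IsTopologicalGroup E]
    [Group F] [TopologicalSpace F] [IsTopologicalGroup F]
    (ι₁ : G →* F) (ι₂ : E →* F) (hco : IsProfiniteCoprod G E F ι₁ ι₂)
    (hG : IsProjectiveProfinite G) (hE : IsProjectiveProfinite E) :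
    IsProjectiveProfinite F := by
  intro A B _ _ _ _ α φ hα hker
  let _ : TopologicalSpace A := ⊥
  have _ : DiscreteTopology A := ⟨rfl⟩
  let _ : TopologicalSpace B := ⊥
  have _ : DiscreteTopology B := ⟨rfl⟩
  have hφ : Continuous φ := (φ.continuous_iff_isOpen_ker).2 hker
  obtain ⟨ψ₁, hψ₁, hαψ₁⟩ := hG A B α (φ.comp ι₁) hα (hker.preimage hco.1)
  obtain ⟨ψ₂, hψ₂, hαψ₂⟩ := hE A B α (φ.comp ι₂) hα (hker.preimage hco.2.1)
  obtain ⟨ψ, ⟨hψ, hψι₁, hψι₂⟩, -⟩ := hco.2.2 B ψ₁ ψ₂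
    (ψ₁.continuous_iff_isOpen_ker.2 hψ₁) (ψ₂.continuous_iff_isOpen_ker.2 hψ₂)
  refine ⟨ψ, ψ.continuous_iff_isOpen_ker.1 hψ,
    hco.hom_ext_s14 ((continuous_of_discreteTopology (f := α)).comp hψ) hφ ?_ ?_⟩
  · rw [MonoidHom.comp_assoc, hψι₁, hαψ₁]
  · rw [MonoidHom.comp_assoc, hψι₂, hαψ₂]

/-- the free profinite product of two projective profinite groups is
projective. -/
theorem stmt_14 (G E F : Type)
    [Group G] [TopologicalSpace G] [IsTopologicalGroup G] [CompactSpace G] [T2Space G]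
    [TotallyDisconnectedSpace G]
    [Group E] [TopologicalSpace E] [IsTopologicalGroup E] [CompactSpace E] [T2Space E]
    [TotallyDisconnectedSpace E]
    [Group F] [TopologicalSpace F] [IsTopologicalGroup F] [CompactSpace F] [T2Space F]
    [TotallyDisconnectedSpace F]
    (ι₁ : G →* F) (ι₂ : E →* F) (hco : IsProfiniteCoprod G E F ι₁ ι₂)
    (hG : IsProjectiveProfinite G) (hE : IsProjectiveProfinite E) :
    IsProjectiveProfinite F :=
  stmt_14_general G E F ι₁ ι₂ hco hG hE
end
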